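/- arXiv:2602.17782 — 4 statements merged into one kernel-verified Lean document; each statement's English description precedes it below -/
import Mathlib

section
/- Let φ : ℝ → ℝ be a solution of the ODE φ'' = -(a/2)sin(2φ) + b·φ'·cos φ (a, b real constants). Suppose 2φ(T₀) = πε for some T₀ and ε ∈ {-1,1}. Then for all t ∈ ℝ, φ(T₀ - t) + φ(T₀ + t) = πε. -/
open Real

/-- `φ` is a (twice differentiable) solution of the perturbed pendulum equation
`φ'' = -(a/2)sin(2φ) + b·φ'·cos φ` on all of `ℝ`. -/
def IsPendulumSol (a b : ℝ) (φ : ℝ → ℝ) : Prop :=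
  Differentiable ℝ φ ∧ Differentiable ℝ (deriv φ) ∧
    ∀ t : ℝ, deriv (deriv φ) t = -(a / 2) * sin (2 * φ t) + b * deriv φ t * cos (φ t)

/-- If `φ` solves the perturbed pendulum equation, solutions of this equation are
unique given initial position and velocity, and `2φ(T₀) = πε` for some `ε ∈ {-1, 1}`,
then `φ(T₀ - t) + φ(T₀ + t) = πε` for all `t ∈ ℝ`. -/
theorem pendulum_reflection (a b : ℝ) (φ : ℝ → ℝ)
    (hφ : IsPendulumSol a b φ)
    (huniq : ∀ ψ₁ ψ₂ : ℝ → ℝ, IsPendulumSol a b ψ₁ → IsPendulumSol a b ψ₂ →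
      ψ₁ 0 = ψ₂ 0 → deriv ψ₁ 0 = deriv ψ₂ 0 → ψ₁ = ψ₂)
    (T₀ : ℝ) (ε : ℝ) (hε : ε = -1 ∨ ε = 1) (hT₀ : 2 * φ T₀ = π * ε) :
    ∀ t : ℝ, φ (T₀ - t) + φ (T₀ + t) = π * ε := by
  obtain ⟨hd1, hd2, hode⟩ := hφ
  set ψ₁ : ℝ → ℝ := fun t => φ (T₀ + t) with hψ₁
  set ψ₂ : ℝ → ℝ := fun t => π * ε - φ (T₀ - t) with hψ₂
  have hdψ₁ : deriv ψ₁ = fun t => deriv φ (T₀ + t) := by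
    funext t; exact deriv_comp_const_add φ T₀ t
  have hdψ₂ : deriv ψ₂ = fun t => deriv φ (T₀ - t) := by
    funext t
    have : deriv (fun x => φ (T₀ - x)) t = -deriv φ (T₀ - t) :=
      deriv_comp_const_sub φ T₀ t
    have h2 : deriv ψ₂ t = -deriv (fun x => φ (T₀ - x)) t := by
      rw [hψ₂]
      simp only [deriv_const_sub]
    rw [h2, this, neg_neg]
  have hsin : ∀ x : ℝ, sin (2 * (π * ε - x)) = -sin (2 * x) := by
    intro x
    rcases hε with h | h <;> subst h
    · rw [show 2 * (π * -1 - x) = -(2 * x + 2 * π) by ring, sin_neg,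
        Real.sin_add_two_pi]
    · rw [show 2 * (π * 1 - x) = 2*π - 2*x by ring, Real.sin_two_pi_sub]
  have hcos : ∀ x : ℝ, cos (π * ε - x) = -cos x := by
    intro x
    rcases hε with h | h <;> subst h <;> simp [cos_sub]
  have hsol₁ : IsPendulumSol a b ψ₁ := by
    refine ⟨hd1.comp (differentiable_id.const_add T₀), ?_, ?_⟩
    · rw [hdψ₁]; exact hd2.comp (differentiable_id.const_add T₀)
    · intro t
      rw [hdψ₁]
      have : deriv (fun t => deriv φ (T₀ + t)) t = deriv (deriv φ) (T₀ + t) :=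
        deriv_comp_const_add (deriv φ) T₀ t
      rw [this, hode]
  have hsol₂ : IsPendulumSol a b ψ₂ := by
    refine ⟨(differentiable_const _).sub
      (hd1.comp ((differentiable_const T₀).sub differentiable_id)), ?_, ?_⟩
    · rw [hdψ₂]; exact hd2.comp ((differentiable_const T₀).sub differentiable_id)
    · intro t
      rw [hdψ₂]
      have h1 : deriv (fun t => deriv φ (T₀ - t)) t = -deriv (deriv φ) (T₀ - t) :=
        deriv_comp_const_sub (deriv φ) T₀ t
      rw [h1, hode, hψ₂]
      simp only
      rw [hsin (φ (T₀ - t)), hcos (φ (T₀ - t))]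
      ring
  have hT₀' : φ T₀ = π * ε - φ T₀ := by linarith
  have heq : ψ₁ = ψ₂ := by
    apply huniq _ _ hsol₁ hsol₂
    · simpa [hψ₁, hψ₂] using hT₀'
    · rw [hdψ₁, hdψ₂]; simp
  intro t
  have := congrFun heq t
  simp only [hψ₁, hψ₂] at this
  linarith
end

section
/- Let φ : ℝ → ℝ be τ-periodic and suppose T₁ ≥ 0 satisfies the reflection identity φ(T₁ - t) + φ(T₁ + t) = πε for all t (ε ∈ {-1,1}). Define z(T) = ∫₀^T cos φ(t) dt. Then z(kτ) = 0 for every natural number k. -/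
open Real intervalIntegral

/-- If `φ` is continuous and `τ`-periodic, and `T₁ ≥ 0` satisfies the reflection
identity `φ(T₁ - t) + φ(T₁ + t) = πε` for all `t` (with `ε ∈ {-1, 1}`), then
`z(kτ) = 0` for every natural number `k`, where `z(T) = ∫₀^T cos φ(t) dt`. -/
theorem z_vanishes_at_periods (φ : ℝ → ℝ) (hφ : Continuous φ)
    (τ : ℝ) (hτ : 0 < τ) (hper : Function.Periodic φ τ)
    (T₁ ε : ℝ) (hT₁ : 0 ≤ T₁) (hε : ε = -1 ∨ ε = 1)
    (hrefl : ∀ t : ℝ, φ (T₁ - t) + φ (T₁ + t) = π * ε) :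
    ∀ k : ℕ, ∫ t in (0 : ℝ)..(k * τ), cos (φ t) = 0 := by
  set f : ℝ → ℝ := fun t => cos (φ t) with hf_def
  have hf : Continuous f := Real.continuous_cos.comp hφ
  have hint : ∀ t₁ t₂ : ℝ, IntervalIntegrable f MeasureTheory.volume t₁ t₂ :=
    fun t₁ t₂ => hf.intervalIntegrable t₁ t₂
  have hfper : Function.Periodic f τ := fun t => by simp [hf_def, hper t]
  have hanti : ∀ t : ℝ, f (T₁ + t) = - f (T₁ - t) := by
    intro t
    have h1 : φ (T₁ + t) = π * ε - φ (T₁ - t) := by linarith [hrefl t]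
    simp only [hf_def, h1]
    rcases hε with h | h <;> subst h <;>
      simp [Real.cos_sub]
  have hzero : ∫ t in (T₁ - τ/2)..(T₁ + τ/2), f t = 0 := by
    have hsplit : ∫ t in (T₁ - τ/2)..(T₁ + τ/2), f t =
        (∫ t in (T₁ - τ/2)..T₁, f t) + ∫ t in T₁..(T₁ + τ/2), f t :=
      (integral_add_adjacent_intervals (hint _ _) (hint _ _)).symm
    have h1 : ∫ t in T₁..(T₁ + τ/2), f t = ∫ t in (0:ℝ)..(τ/2), f (T₁ + t) := by
      rw [integral_comp_add_left]; ring_nf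
    have h2 : ∫ t in (T₁ - τ/2)..T₁, f t = ∫ t in (0:ℝ)..(τ/2), f (T₁ - t) := by
      rw [integral_comp_sub_left]; ring_nf
    rw [hsplit, h1, h2]
    have : ∫ t in (0:ℝ)..(τ/2), f (T₁ + t) = - ∫ t in (0:ℝ)..(τ/2), f (T₁ - t) := by
      rw [← intervalIntegral.integral_neg]
      exact intervalIntegral.integral_congr fun t _ => hanti t
    rw [this]; ring
  have hτ0 : ∫ t in (0:ℝ)..τ, f t = 0 := by
    have := hfper.intervalIntegral_add_eq 0 (T₁ - τ/2)
    rw [zero_add] at this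
    rw [this]
    have he : T₁ - τ/2 + τ = T₁ + τ/2 := by ring
    rw [he, hzero]
  intro k
  induction k with
  | zero => simp
  | succ k ih =>
    have : ((k : ℝ) + 1) * τ = (k : ℝ) * τ + τ := by ring
    push_cast
    rw [this, ← integral_add_adjacent_intervals (hint 0 ((k:ℝ)*τ)) (hint ((k:ℝ)*τ) _)]
    · push_cast at ih
      rw [ih, zero_add]
      rw [hfper.intervalIntegral_add_eq ((k:ℝ)*τ) 0, zero_add, hτ0]
end

section
/- Let (φ, r) : [0,T] → ℝ² be a solution of the system φ' = r, r' = -(a/2)sin(2φ) + b·r·cos φ. Then (φ₃(t), r₃(t)) := (-φ(T - t) + π, r(T - t)) is also a solution of the same system on [0,T]. -/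
open Real

/-- If `(φ, r)` solves the perturbed pendulum system `φ' = r`,
`r' = -(a/2)sin(2φ) + b·r·cos φ` on `[0, T]`, then the `ε₃`-symmetric pair
`(φ₃(t), r₃(t)) := (-φ(T - t) + π, r(T - t))` is also a solution of the same
system on `[0, T]`. -/
theorem symmetry_eps3_vertical (a b T : ℝ) (φ r : ℝ → ℝ)
    (hφ : Differentiable ℝ φ) (hr : Differentiable ℝ r)
    (hode₁ : ∀ t ∈ Set.Icc 0 T, deriv φ t = r t)
    (hode₂ : ∀ t ∈ Set.Icc 0 T,
      deriv r t = -(a / 2) * sin (2 * φ t) + b * r t * cos (φ t)) :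
    ∀ t ∈ Set.Icc 0 T,
      deriv (fun s => -φ (T - s) + π) t = r (T - t) ∧
      deriv (fun s => r (T - s)) t
        = -(a / 2) * sin (2 * (-φ (T - t) + π))
            + b * r (T - t) * cos (-φ (T - t) + π) := by
  intro t ht
  have ht' : T - t ∈ Set.Icc 0 T := ⟨by linarith [ht.2], by linarith [ht.1]⟩
  constructor
  · have h1 : deriv (fun s => -φ (T - s) + π) t
        = -deriv (fun s => φ (T - s)) t := by
      rw [deriv_add_const]
      exact deriv.neg
    rw [h1, deriv_comp_const_sub, hode₁ _ ht']
    ring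
  · rw [deriv_comp_const_sub, hode₂ _ ht']
    have h2 : sin (2 * (-φ (T - t) + π)) = -sin (2 * φ (T - t)) := by
      rw [show 2 * (-φ (T - t) + π) = -(2 * φ (T - t)) + 2 * π by ring]
      simp [Real.sin_add]
    have h3 : cos (-φ (T - t) + π) = -cos (φ (T - t)) := by
      simp [Real.cos_add]
    rw [h2, h3]
    ring
end

section
/- Let θ be a real 2×2 matrix, η ∈ ℝ², and φ : [0,T] → ℝ continuous. Define z(t) = ∫₀^t cos φ(s) ds and w(t) = ∫₀^t sin φ(s) · exp(z(s)θ)η ds. Set φ₃(t) := -φ(T-t) + π, z₃(t) := ∫₀^t cos φ₃(s) ds, and w₃(t) := ∫₀^t sin φ₃(s) · exp(z₃(s)θ)η ds. Then z₃(t) = z(T-t) - z(T) and w₃(t) = exp(-z(T)θ)(w(T) - w(T-t)) for all t ∈ [0,T]. -/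
open Real

/-- The horizontal `ℝ`-component: `z(t) = ∫₀^t cos φ(s) ds`. -/
noncomputable def zComp (φ : ℝ → ℝ) (t : ℝ) : ℝ :=
  ∫ s in (0 : ℝ)..t, cos (φ s)

/-- The horizontal `ℝ²`-component: `w(t) = ∫₀^t sin φ(s) · exp(z(s)θ)η ds`. -/
noncomputable def wComp (θ : Matrix (Fin 2) (Fin 2) ℝ) (η : Fin 2 → ℝ)
    (φ : ℝ → ℝ) (t : ℝ) : Fin 2 → ℝ :=
  ∫ s in (0 : ℝ)..t, sin (φ s) • (NormedSpace.exp (zComp φ s • θ)).mulVec η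

/-!
Reversing time, `s ↦ T - s`, turns `∫₀^t f(T - s) ds` into `∫_{T-t}^T f`, the difference of two
values of the primitive. Since `cos (π - x) = -cos x` and `sin (π - x) = sin x`, this gives `z₃`
directly; for `w₃` the factor `exp(z₃(s)θ) = exp(-z(T)θ) exp(z(T-s)θ)` is pulled out of the
integral as a constant matrix.
-/

theorem intervalIntegral_comp_sub_left_eq_sub {E : Type*} [NormedAddCommGroup E]
    [NormedSpace ℝ E] {f : ℝ → E} {T t : ℝ} (hT : IntervalIntegrable f MeasureTheory.volume 0 T)
    (hTt : IntervalIntegrable f MeasureTheory.volume 0 (T - t)) :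
    ∫ s in (0 : ℝ)..t, f (T - s) = (∫ s in (0 : ℝ)..T, f s) - ∫ s in (0 : ℝ)..(T - t), f s := by
  rw [intervalIntegral.integral_comp_sub_left f T, sub_zero,
    intervalIntegral.integral_interval_sub_left hT hTt]

namespace Matrix

variable {m n : Type*} [Fintype m] [Fintype n]

theorem intervalIntegral_mulVec (A : Matrix m n ℝ) {f : ℝ → n → ℝ} {a b : ℝ}
    (hf : IntervalIntegrable f MeasureTheory.volume a b) :
    ∫ s in a..b, A *ᵥ f s = A *ᵥ ∫ s in a..b, f s :=
  (LinearMap.toContinuousLinearMap A.mulVecLin).intervalIntegral_comp_comm hf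

variable [DecidableEq n]

open scoped Norms.Operator in
theorem continuous_exp_smul (A : Matrix n n ℝ) :
    Continuous fun r : ℝ => NormedSpace.exp (r • A) :=
  NormedSpace.exp_continuous.comp (continuous_id.smul continuous_const)

theorem exp_sub_smul (A : Matrix n n ℝ) (a b : ℝ) :
    NormedSpace.exp ((a - b) • A) = NormedSpace.exp ((-b) • A) * NormedSpace.exp (a • A) := by
  rw [show (a - b) • A = (-b) • A + a • A by module]
  exact exp_add_of_commute _ _ (((Commute.refl A).smul_left (-b)).smul_right a)

end Matrix

theorem continuous_zComp {φ : ℝ → ℝ} (hφ : Continuous φ) : Continuous (zComp φ) :=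
  intervalIntegral.continuous_primitive
    (fun a b => (continuous_cos.comp hφ).intervalIntegrable a b) 0

theorem continuous_wComp_integrand (θ : Matrix (Fin 2) (Fin 2) ℝ) (η : Fin 2 → ℝ)
    {φ : ℝ → ℝ} (hφ : Continuous φ) :
    Continuous fun s => sin (φ s) • (NormedSpace.exp (zComp φ s • θ)).mulVec η :=
  (continuous_sin.comp hφ).smul
    (((Matrix.continuous_exp_smul θ).comp (continuous_zComp hφ)).matrix_mulVec continuous_const)

theorem zComp_eps3 {φ : ℝ → ℝ} (hφ : Continuous φ) (T t : ℝ) :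
    zComp (fun s => -φ (T - s) + π) t = zComp φ (T - t) - zComp φ T := by
  have hcos : Continuous fun s => cos (φ s) := continuous_cos.comp hφ
  simp only [zComp, neg_add_eq_sub, cos_pi_sub, intervalIntegral.integral_neg]
  rw [intervalIntegral_comp_sub_left_eq_sub (hcos.intervalIntegrable 0 T)
    (hcos.intervalIntegrable 0 (T - t)), neg_sub]

theorem wComp_eps3 (θ : Matrix (Fin 2) (Fin 2) ℝ) (η : Fin 2 → ℝ) {φ : ℝ → ℝ}
    (hφ : Continuous φ) (T t : ℝ) :
    wComp θ η (fun s => -φ (T - s) + π) t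
      = (NormedSpace.exp ((-(zComp φ T)) • θ)).mulVec
          (wComp θ η φ T - wComp θ η φ (T - t)) := by
  set g : ℝ → Fin 2 → ℝ := fun s => sin (φ s) • (NormedSpace.exp (zComp φ s • θ)).mulVec η
  have hg : Continuous g := continuous_wComp_integrand θ η hφ
  have integrand_eq : ∀ s, sin (-φ (T - s) + π) •
      (NormedSpace.exp (zComp (fun s => -φ (T - s) + π) s • θ)).mulVec η
        = (NormedSpace.exp ((-(zComp φ T)) • θ)).mulVec (g (T - s)) := by
    intro s
    rw [zComp_eps3 hφ, neg_add_eq_sub, sin_pi_sub, Matrix.exp_sub_smul, ← Matrix.mulVec_mulVec,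
      Matrix.mulVec_smul]
  calc wComp θ η (fun s => -φ (T - s) + π) t
      = ∫ s in (0 : ℝ)..t, (NormedSpace.exp ((-(zComp φ T)) • θ)).mulVec (g (T - s)) := by
        simp only [wComp, integrand_eq]
    _ = (NormedSpace.exp ((-(zComp φ T)) • θ)).mulVec (∫ s in (0 : ℝ)..t, g (T - s)) :=
        Matrix.intervalIntegral_mulVec _
          ((hg.comp (continuous_sub_left T)).intervalIntegrable 0 t)
    _ = _ := by
        rw [intervalIntegral_comp_sub_left_eq_sub (hg.intervalIntegrable 0 T)
          (hg.intervalIntegrable 0 (T - t))]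
        rfl

theorem symmetry_eps3_horizontal_general (θ : Matrix (Fin 2) (Fin 2) ℝ) (η : Fin 2 → ℝ)
    (T : ℝ) (φ : ℝ → ℝ) (hφ : Continuous φ) :
    ∀ t ∈ Set.Icc 0 T,
      zComp (fun s => -φ (T - s) + π) t = zComp φ (T - t) - zComp φ T ∧
      wComp θ η (fun s => -φ (T - s) + π) t
        = (NormedSpace.exp ((-(zComp φ T)) • θ)).mulVec
            (wComp θ η φ T - wComp θ η φ (T - t)) :=
  fun t _ => ⟨zComp_eps3 hφ T t, wComp_eps3 θ η hφ T t⟩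

/-- Under the symmetry `ε₃`, `φ₃(t) = -φ(T - t) + π`, the horizontal components
satisfy `z₃(t) = z(T - t) - z(T)` and `w₃(t) = exp(-z(T)θ)(w(T) - w(T - t))` for
`t ∈ [0, T]`. -/
theorem symmetry_eps3_horizontal (θ : Matrix (Fin 2) (Fin 2) ℝ) (η : Fin 2 → ℝ)
    (T : ℝ) (hT : 0 ≤ T) (φ : ℝ → ℝ) (hφ : Continuous φ) :
    ∀ t ∈ Set.Icc 0 T,
      zComp (fun s => -φ (T - s) + π) t = zComp φ (T - t) - zComp φ T ∧
      wComp θ η (fun s => -φ (T - s) + π) t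
        = (NormedSpace.exp ((-(zComp φ T)) • θ)).mulVec
            (wComp θ η φ T - wComp θ η φ (T - t)) :=
  symmetry_eps3_horizontal_general θ η T φ hφ
end
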